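/- Let A = (A_1, …, A_N) be an N-tuple of bounded operators on a Hilbert space X such that ζA := Σ ζ_k A_k is a contraction for every ζ ∈ 𝕋^N. Then A is completely non-unitary in the pencil sense (there is no nonzero closed subspace of X reducing all A_k on which ζA is unitary for every ζ ∈ 𝕋^N) if and only if the associated conservative system α with these main operators is closely connected (X_cc = X), provided α = (N; A, B, C, D; X, U, Y) is a conservative scattering system. -/

import Mathlib

/-!
For `ζ ∈ 𝕋^N`, unitarity of `ζG_α` gives `‖ζA x‖² + ‖ζC x‖² = ‖x‖²`,
`‖(ζA)* x‖² + ‖(ζB)* x‖² = ‖x‖²` and `ζA (ζA)* + ζB (ζB)* = 1`. Hence on a subspace `S`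
reducing every `A_k`, the pencil `ζA` is unitary for all `ζ ∈ 𝕋^N` iff every `C_k` and every
`B_k*` vanish on `S` (varying `ζ` over the torus separates the indices `k`). Such a vanishing is
in turn equivalent to `S ⊥ X_cc`, because `S^⊥` is then invariant under every monomial
`p(A, A*)`. So `X ⊖ X_cc` is the largest reducing subspace on which the pencil is unitary,
and it is zero exactly when `X_cc = X`.
-/

noncomputable section

open scoped ComplexConjugate

/-- A bundled separable complex Hilbert space. -/
structure HilbertSp : Type 1 where
  carrier : Type
  [iN : NormedAddCommGroup carrier]
  [iI : InnerProductSpace ℂ carrier]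
  [iC : CompleteSpace carrier]
  [iS : TopologicalSpace.SeparableSpace carrier]

attribute [instance] HilbertSp.iN HilbertSp.iI HilbertSp.iC HilbertSp.iS

variable {N : ℕ}

/-- The linear pencil `z ↦ Σₖ z_k T_k` associated with an `N`-tuple of operators. -/
def pencil {E F : Type*} [NormedAddCommGroup E] [NormedAddCommGroup F]
    [NormedSpace ℂ E] [NormedSpace ℂ F]
    (T : Fin N → (E →L[ℂ] F)) (z : Fin N → ℂ) : E →L[ℂ] F := ∑ k, z k • T k

/-- membership in the unit torus `𝕋^N` -/
def onTorus (ζ : Fin N → ℂ) : Prop := ∀ k, ‖ζ k‖ = 1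

/-- membership in the open unit polydisk `𝔻^N` -/
def inPolydisk (z : Fin N → ℂ) : Prop := ∀ k, ‖z k‖ < 1

/-- `θ` has a zero of multiplicity `m` at `z = 0`: it is holomorphic near `0` and the
homogeneous terms of its Taylor expansion of degree `< m` vanish while that of degree `m`
does not. -/
def HasZeroOfOrder {U Y : Type*} [NormedAddCommGroup U] [NormedAddCommGroup Y]
    [NormedSpace ℂ U] [NormedSpace ℂ Y]
    (θ : (Fin N → ℂ) → (U →L[ℂ] Y)) (m : ℕ) : Prop :=
  ∃ p : FormalMultilinearSeries ℂ (Fin N → ℂ) (U →L[ℂ] Y),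
    HasFPowerSeriesAt θ p 0 ∧ (∀ j, j < m → ∀ z : Fin N → ℂ, (p j) (fun _ => z) = 0) ∧
      (∃ z : Fin N → ℂ, (p m) (fun _ => z) ≠ 0)

/-- The product `(zL⁽¹⁾)(zL⁽²⁾)⋯(zL⁽ᵐ⁾) : Ysp m → Ysp 0` of linear pencils along a chain of
spaces, where `L j k : Ysp (j+1) → Ysp j` plays the role of `L_k^{(j+1)}`. -/
def chainMul {Ysp : ℕ → Type*} [∀ j, NormedAddCommGroup (Ysp j)] [∀ j, NormedSpace ℂ (Ysp j)]
    (L : (j : ℕ) → Fin N → (Ysp (j + 1) →L[ℂ] Ysp j)) (z : Fin N → ℂ) :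
    (m : ℕ) → (Ysp m →L[ℂ] Ysp 0)
  | 0 => ContinuousLinearMap.id ℂ (Ysp 0)
  | (m + 1) => (chainMul L z m).comp (pencil (L m) z)

/-- The product `(zR⁽ᵐ⁾)⋯(zR⁽¹⁾) : Usp 0 → Usp m` of linear pencils along a chain of
spaces, where `R j k : Usp j → Usp (j+1)` plays the role of `R_k^{(j+1)}`. -/
def chainMulR {Usp : ℕ → Type*} [∀ j, NormedAddCommGroup (Usp j)] [∀ j, NormedSpace ℂ (Usp j)]
    (R : (j : ℕ) → Fin N → (Usp j →L[ℂ] Usp (j + 1))) (z : Fin N → ℂ) :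
    (m : ℕ) → (Usp 0 →L[ℂ] Usp m)
  | 0 => ContinuousLinearMap.id ℂ (Usp 0)
  | (m + 1) => (pencil (R m) z).comp (chainMulR R z m)

/-- the Hilbert space direct sum `E ⊕ F` -/
abbrev hS (E F : Type*) := WithLp 2 (E × F)

section blocks

variable (E F : Type*) [NormedAddCommGroup E] [NormedAddCommGroup F]
  [NormedSpace ℂ E] [NormedSpace ℂ F]

/-- inclusion of the first summand -/
def inlL : E →L[ℂ] hS E F :=
  ((WithLp.prodContinuousLinearEquiv 2 ℂ E F).symm : E × F →L[ℂ] hS E F).comp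
    (ContinuousLinearMap.inl ℂ E F)

/-- inclusion of the second summand -/
def inrL : F →L[ℂ] hS E F :=
  ((WithLp.prodContinuousLinearEquiv 2 ℂ E F).symm : E × F →L[ℂ] hS E F).comp
    (ContinuousLinearMap.inr ℂ E F)

/-- projection onto the first summand -/
def fstL : hS E F →L[ℂ] E :=
  (ContinuousLinearMap.fst ℂ E F).comp
    (WithLp.prodContinuousLinearEquiv 2 ℂ E F : hS E F →L[ℂ] E × F)

/-- projection onto the second summand -/
def sndL : hS E F →L[ℂ] F :=
  (ContinuousLinearMap.snd ℂ E F).comp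
    (WithLp.prodContinuousLinearEquiv 2 ℂ E F : hS E F →L[ℂ] E × F)

end blocks

/-- the block operator `[[A,B],[C,D]] : X ⊕ U → X' ⊕ Y'` -/
def block2 {X U X' Y' : Type*} [NormedAddCommGroup X] [NormedAddCommGroup U]
    [NormedAddCommGroup X'] [NormedAddCommGroup Y']
    [NormedSpace ℂ X] [NormedSpace ℂ U] [NormedSpace ℂ X'] [NormedSpace ℂ Y']
    (A : X →L[ℂ] X') (B : U →L[ℂ] X') (C : X →L[ℂ] Y') (D : U →L[ℂ] Y') :
    hS X U →L[ℂ] hS X' Y' :=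
  (inlL X' Y').comp (A.comp (fstL X U)) + (inlL X' Y').comp (B.comp (sndL X U)) +
    (inrL X' Y').comp (C.comp (fstL X U)) + (inrL X' Y').comp (D.comp (sndL X U))

/-- the transfer function `θ_α(z) = zD + zC (1 - zA)⁻¹ zB` of the system
`α = (N; A, B, C, D; X, U, Y)` -/
def transfer {X U Y : Type*} [NormedAddCommGroup X] [NormedAddCommGroup U] [NormedAddCommGroup Y]
    [NormedSpace ℂ X] [NormedSpace ℂ U] [NormedSpace ℂ Y]
    (A : Fin N → (X →L[ℂ] X)) (B : Fin N → (U →L[ℂ] X)) (C : Fin N → (X →L[ℂ] Y))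
    (D : Fin N → (U →L[ℂ] Y)) (z : Fin N → ℂ) : U →L[ℂ] Y :=
  pencil D z + (pencil C z).comp ((Ring.inverse (1 - pencil A z)).comp (pencil B z))

/-- unitarity of a bounded operator between Hilbert spaces -/
def IsUnitaryOp {E F : Type*} [NormedAddCommGroup E] [InnerProductSpace ℂ E] [CompleteSpace E]
    [NormedAddCommGroup F] [InnerProductSpace ℂ F] [CompleteSpace F] (W : E →L[ℂ] F) : Prop :=
  (ContinuousLinearMap.adjoint W).comp W = 1 ∧ W.comp (ContinuousLinearMap.adjoint W) = 1

/-- the block operator `G_α` of a system, as an `N`-tuple -/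
def sysBlock {X U Y : Type*} [NormedAddCommGroup X] [NormedAddCommGroup U] [NormedAddCommGroup Y]
    [NormedSpace ℂ X] [NormedSpace ℂ U] [NormedSpace ℂ Y]
    (A : Fin N → (X →L[ℂ] X)) (B : Fin N → (U →L[ℂ] X)) (C : Fin N → (X →L[ℂ] Y))
    (D : Fin N → (U →L[ℂ] Y)) : Fin N → (hS X U →L[ℂ] hS X Y) :=
  fun k => block2 (A k) (B k) (C k) (D k)

/-- `α` is a conservative scattering system: `ζ G_α` is unitary for every `ζ ∈ 𝕋^N`. -/
def Conservative {X U Y : Type*} [NormedAddCommGroup X] [InnerProductSpace ℂ X] [CompleteSpace X]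
    [NormedAddCommGroup U] [InnerProductSpace ℂ U] [CompleteSpace U]
    [NormedAddCommGroup Y] [InnerProductSpace ℂ Y] [CompleteSpace Y]
    (A : Fin N → (X →L[ℂ] X)) (B : Fin N → (U →L[ℂ] X)) (C : Fin N → (X →L[ℂ] Y))
    (D : Fin N → (U →L[ℂ] Y)) : Prop :=
  ∀ ζ : Fin N → ℂ, onTorus ζ → IsUnitaryOp (pencil (sysBlock A B C D) ζ)
section cascade

variable {N : ℕ} {X1 V X2 U Y : Type*}
  [NormedAddCommGroup X1] [NormedAddCommGroup V] [NormedAddCommGroup X2]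
  [NormedAddCommGroup U] [NormedAddCommGroup Y]
  [NormedSpace ℂ X1] [NormedSpace ℂ V] [NormedSpace ℂ X2]
  [NormedSpace ℂ U] [NormedSpace ℂ Y]

/-- the main operators `A_k` of the cascade connection `α⁽²⁾α⁽¹⁾`, acting on
`X⁽²⁾ ⊕ V ⊕ X⁽¹⁾` by the block matrix `[[A⁽²⁾, B⁽²⁾, 0],[0,0,C⁽¹⁾],[0,0,A⁽¹⁾]]` -/
def cascA (A1 : Fin N → (X1 →L[ℂ] X1)) (C1 : Fin N → (X1 →L[ℂ] V))
    (A2 : Fin N → (X2 →L[ℂ] X2)) (B2 : Fin N → (V →L[ℂ] X2)) :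
    Fin N → (hS X2 (hS V X1) →L[ℂ] hS X2 (hS V X1)) := fun k =>
  block2 (A2 k) ((B2 k).comp (fstL V X1)) 0 (block2 0 (C1 k) 0 (A1 k))

/-- the input operators `B_k = col(0, D⁽¹⁾, B⁽¹⁾)` of the cascade connection -/
def cascB (B1 : Fin N → (U →L[ℂ] X1)) (D1 : Fin N → (U →L[ℂ] V)) :
    Fin N → (U →L[ℂ] hS X2 (hS V X1)) := fun k =>
  (inrL X2 (hS V X1)).comp ((inlL V X1).comp (D1 k) + (inrL V X1).comp (B1 k))

/-- the output operators `C_k = [C⁽²⁾, D⁽²⁾, 0]` of the cascade connection -/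
def cascC (C2 : Fin N → (X2 →L[ℂ] Y)) (D2 : Fin N → (V →L[ℂ] Y)) :
    Fin N → (hS X2 (hS V X1) →L[ℂ] Y) := fun k =>
  (C2 k).comp (fstL X2 (hS V X1)) + (D2 k).comp ((fstL V X1).comp (sndL X2 (hS V X1)))

/-- the external operators `D_k = 0` of the cascade connection -/
def cascD : Fin N → (U →L[ℂ] Y) := fun _ => 0

end cascade

section cc

variable {N : ℕ} {X U Y : Type*}
  [NormedAddCommGroup X] [InnerProductSpace ℂ X] [CompleteSpace X]
  [NormedAddCommGroup U] [InnerProductSpace ℂ U] [CompleteSpace U]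
  [NormedAddCommGroup Y] [InnerProductSpace ℂ Y] [CompleteSpace Y]

/-- the monomial `p(A, A*)` associated with a word `w` in the `2N` noncommuting letters
`A_1, …, A_N, A_1^*, …, A_N^*` -/
def wordOp (A : Fin N → (X →L[ℂ] X)) (w : List (Fin N × Bool)) : X →L[ℂ] X :=
  (w.map (fun p => if p.2 then A p.1 else ContinuousLinearMap.adjoint (A p.1))).prod

/-- the generating set `⋃ p(A,A*)(B_k U + C_j* Y)` of the closely connected subspace -/
def ccSet (A : Fin N → (X →L[ℂ] X)) (B : Fin N → (U →L[ℂ] X)) (C : Fin N → (X →L[ℂ] Y)) :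
    Set X :=
  {x | ∃ (w : List (Fin N × Bool)) (k : Fin N) (u : U), x = wordOp A w (B k u)} ∪
    {x | ∃ (w : List (Fin N × Bool)) (j : Fin N) (y : Y),
      x = wordOp A w ((ContinuousLinearMap.adjoint (C j)) y)}

/-- the closely connected subspace `X_cc`: the smallest closed subspace containing all
`B_k U`, `C_j^* Y` and reducing every `A_k` -/
def ccSpace (A : Fin N → (X →L[ℂ] X)) (B : Fin N → (U →L[ℂ] X)) (C : Fin N → (X →L[ℂ] Y)) :
    Submodule ℂ X :=
  (Submodule.span ℂ (ccSet A B C)).topologicalClosure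

/-- a system is closely connected if `X_cc = X` -/
def CloselyConnected (A : Fin N → (X →L[ℂ] X)) (B : Fin N → (U →L[ℂ] X))
    (C : Fin N → (X →L[ℂ] Y)) : Prop :=
  ccSpace A B C = ⊤

end cc

/-- the pencil `ζA` has a (nonzero) unitary part: some nonzero closed subspace reduces every
`A_k` and `ζA` restricts to a unitary operator on it for every `ζ ∈ 𝕋^N` -/
def HasUnitaryPart {N : ℕ} {X : Type} [NormedAddCommGroup X] [InnerProductSpace ℂ X]
    [CompleteSpace X] (A : Fin N → (X →L[ℂ] X)) : Prop :=
  ∃ S : Submodule ℂ X, S ≠ ⊥ ∧ IsClosed (S : Set X) ∧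
    (∀ k, (∀ x ∈ S, A k x ∈ S) ∧ (∀ x ∈ S, ContinuousLinearMap.adjoint (A k) x ∈ S)) ∧
    ∀ ζ : Fin N → ℂ, onTorus ζ →
      (∀ x ∈ S, ‖pencil A ζ x‖ = ‖x‖) ∧ (∀ y ∈ S, ∃ x ∈ S, pencil A ζ x = y)

open ContinuousLinearMap
open scoped InnerProductSpace

section reducing

variable {𝕜 E : Type*} [RCLike 𝕜] [NormedAddCommGroup E] [InnerProductSpace 𝕜 E]
  [CompleteSpace E]

def Submodule.Reduces (S : Submodule 𝕜 E) (T : E →L[𝕜] E) : Prop :=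
  (∀ x ∈ S, T x ∈ S) ∧ ∀ x ∈ S, adjoint T x ∈ S

theorem Submodule.Reduces.orthogonal {S : Submodule 𝕜 E} {T : E →L[𝕜] E} (h : S.Reduces T) :
    Sᗮ.Reduces T :=
  ⟨orthogonal_mem_invtSubmodule h.2,
    orthogonal_mem_invtSubmodule (T := adjoint T) (by rw [adjoint_adjoint]; exact h.1)⟩

def IsUnitaryOn (T : E →L[𝕜] E) (S : Submodule 𝕜 E) : Prop :=
  (∀ x ∈ S, ‖T x‖ = ‖x‖) ∧ ∀ y ∈ S, ∃ x ∈ S, T x = y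

theorem IsUnitaryOn.norm_adjoint_apply {S : Submodule 𝕜 E} {T : E →L[𝕜] E}
    (hT : IsUnitaryOn T S) (hadj : ∀ x ∈ S, adjoint T x ∈ S) {y : E} (hy : y ∈ S) :
    ‖adjoint T y‖ = ‖y‖ := by
  obtain ⟨x, hx, rfl⟩ := hT.2 y hy
  let V : S →ₗᵢ[𝕜] E := ⟨(T : E →ₗ[𝕜] E).comp S.subtype, fun s => hT.1 s s.2⟩
  -- `T` preserves inner products on `S`, so `adjoint T (T x) - x ∈ S` is orthogonal to `S`
  have hortho : ∀ u ∈ S, ⟪u, adjoint T (T x) - x⟫_𝕜 = 0 := fun u hu => by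
    rw [inner_sub_right, adjoint_inner_right, sub_eq_zero]
    exact V.inner_map_map ⟨u, hu⟩ ⟨x, hx⟩
  have hx' : adjoint T (T x) = x := by
    have h := hortho _ (S.sub_mem (hadj _ hy) hx)
    rwa [inner_self_eq_zero, sub_eq_zero] at h
  rw [hx', hT.1 x hx]

end reducing

section pencil

variable {E F : Type*} [NormedAddCommGroup E] [NormedAddCommGroup F]
  [NormedSpace ℂ E] [NormedSpace ℂ F]

theorem pencil_apply (T : Fin N → E →L[ℂ] F) (z : Fin N → ℂ) (x : E) :
    pencil T z x = ∑ k, z k • T k x := by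
  simp [pencil]

theorem pencil_apply_mem {S : Submodule ℂ E} {T : Fin N → E →L[ℂ] E}
    (hT : ∀ k, ∀ x ∈ S, T k x ∈ S) (z : Fin N → ℂ) {x : E} (hx : x ∈ S) :
    pencil T z x ∈ S := by
  rw [pencil_apply]
  exact S.sum_mem fun k _ => S.smul_mem _ (hT k x hx)

theorem apply_eq_zero_of_pencil_apply_eq_zero {T : Fin N → E →L[ℂ] F} {x : E}
    (h : ∀ ζ, onTorus ζ → pencil T ζ x = 0) (k : Fin N) : T k x = 0 := by
  -- compare `ζ = 1` with `ζ = 1` changed to `-1` in the `k`-th coordinate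
  have hsplit : ∀ c : ℂ, ‖c‖ = 1 → c • T k x + ∑ j ∈ Finset.univ.erase k, T j x = 0 := by
    intro c hc
    have hζ : onTorus (Function.update 1 k c) := fun j => by
      rcases eq_or_ne j k with rfl | hj <;> simp [*]
    have := h _ hζ
    rw [pencil_apply, ← Finset.add_sum_erase _ _ (Finset.mem_univ k)] at this
    rwa [Function.update_self, Finset.sum_congr rfl fun j hj => by
      rw [Function.update_of_ne (Finset.ne_of_mem_erase hj), Pi.one_apply, one_smul]] at this
  have h2 : (2 : ℂ) • T k x = 0 := by
    have := (hsplit 1 (by simp)).trans (hsplit (-1) (by simp)).symm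
    rw [add_left_inj, one_smul, neg_smul, one_smul, eq_neg_iff_add_eq_zero] at this
    rwa [two_smul]
  exact (smul_eq_zero.mp h2).resolve_left two_ne_zero

end pencil

theorem adjoint_pencil {E F : Type*} [NormedAddCommGroup E] [InnerProductSpace ℂ E]
    [CompleteSpace E] [NormedAddCommGroup F] [InnerProductSpace ℂ F] [CompleteSpace F]
    (T : Fin N → E →L[ℂ] F) (z : Fin N → ℂ) :
    adjoint (pencil T z) = pencil (fun k => adjoint (T k)) (fun k => conj (z k)) := by
  simp [pencil, map_sum, map_smulₛₗ]

section block

variable {X U X' Y' : Type*} [NormedAddCommGroup X] [NormedAddCommGroup U]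
  [NormedAddCommGroup X'] [NormedAddCommGroup Y']

theorem block2_apply [NormedSpace ℂ X] [NormedSpace ℂ U] [NormedSpace ℂ X'] [NormedSpace ℂ Y']
    (A : X →L[ℂ] X') (B : U →L[ℂ] X') (C : X →L[ℂ] Y') (D : U →L[ℂ] Y') (v : hS X U) :
    block2 A B C D v = WithLp.toLp 2 (A v.fst + B v.snd, C v.fst + D v.snd) := by
  apply WithLp.ofLp_injective
  ext <;> simp [block2, inlL, inrL, fstL, sndL]

theorem adjoint_block2 [InnerProductSpace ℂ X] [InnerProductSpace ℂ U] [InnerProductSpace ℂ X']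
    [InnerProductSpace ℂ Y'] [CompleteSpace X] [CompleteSpace U] [CompleteSpace X']
    [CompleteSpace Y'] (A : X →L[ℂ] X') (B : U →L[ℂ] X') (C : X →L[ℂ] Y') (D : U →L[ℂ] Y') :
    adjoint (block2 A B C D) = block2 (adjoint A) (adjoint C) (adjoint B) (adjoint D) := by
  refine ((eq_adjoint_iff _ _).mpr fun v w => ?_).symm
  simp only [block2_apply, WithLp.prod_inner_apply, inner_add_left, inner_add_right,
    adjoint_inner_left, WithLp.ofLp_fst, WithLp.ofLp_snd]
  ring

theorem pencil_sysBlock {U Y : Type*} [NormedAddCommGroup U] [NormedAddCommGroup Y]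
    [NormedSpace ℂ X] [NormedSpace ℂ U] [NormedSpace ℂ Y]
    (A : Fin N → X →L[ℂ] X) (B : Fin N → U →L[ℂ] X) (C : Fin N → X →L[ℂ] Y)
    (D : Fin N → U →L[ℂ] Y) (ζ : Fin N → ℂ) :
    pencil (sysBlock A B C D) ζ = block2 (pencil A ζ) (pencil B ζ) (pencil C ζ) (pencil D ζ) := by
  ext v
  apply WithLp.ofLp_injective
  ext <;> simp [block2_apply, pencil_apply, sysBlock, WithLp.ofLp_sum, Prod.fst_sum, Prod.snd_sum,
    Finset.sum_add_distrib]

end block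

theorem eq_iff_eq_zero_of_sq_add_norm_sq_eq {E : Type*} [NormedAddCommGroup E] {a c : ℝ} {v : E}
    (ha : 0 ≤ a) (hc : 0 ≤ c) (h : a ^ 2 + ‖v‖ ^ 2 = c ^ 2) : a = c ↔ v = 0 := by
  constructor
  · rintro rfl
    simpa using h
  · rintro rfl
    simpa [sq_eq_sq₀ ha hc] using h

section conservative

variable {X U Y : Type*}
  [NormedAddCommGroup X] [InnerProductSpace ℂ X] [CompleteSpace X]
  [NormedAddCommGroup U] [InnerProductSpace ℂ U] [CompleteSpace U]
  [NormedAddCommGroup Y] [InnerProductSpace ℂ Y] [CompleteSpace Y]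
  {A : Fin N → X →L[ℂ] X} {B : Fin N → U →L[ℂ] X} {C : Fin N → X →L[ℂ] Y}
  {D : Fin N → U →L[ℂ] Y} {ζ : Fin N → ℂ}

theorem Conservative.norm_sq_main_add_norm_sq_output (hcons : Conservative A B C D)
    (hζ : onTorus ζ) (x : X) : ‖pencil A ζ x‖ ^ 2 + ‖pencil C ζ x‖ ^ 2 = ‖x‖ ^ 2 := by
  have h := congrArg (· ^ 2)
    ((norm_map_iff_adjoint_comp_self _).mpr (hcons ζ hζ).1 (WithLp.toLp 2 (x, (0 : U))))
  simp only [WithLp.prod_norm_sq_eq_of_L2] at h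
  simpa [pencil_sysBlock, block2_apply] using h

theorem Conservative.norm_sq_adjoint_main_add_norm_sq_adjoint_input
    (hcons : Conservative A B C D) (hζ : onTorus ζ) (x : X) :
    ‖adjoint (pencil A ζ) x‖ ^ 2 + ‖adjoint (pencil B ζ) x‖ ^ 2 = ‖x‖ ^ 2 := by
  have h := congrArg (· ^ 2)
    ((norm_map_iff_adjoint_comp_self (adjoint (pencil (sysBlock A B C D) ζ))).mpr
      (by rw [adjoint_adjoint]; exact (hcons ζ hζ).2) (WithLp.toLp 2 (x, (0 : Y))))
  simp only [WithLp.prod_norm_sq_eq_of_L2] at h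
  simpa [pencil_sysBlock, adjoint_block2, block2_apply] using h

theorem Conservative.main_adjoint_add_input_adjoint (hcons : Conservative A B C D)
    (hζ : onTorus ζ) (x : X) :
    pencil A ζ (adjoint (pencil A ζ) x) + pencil B ζ (adjoint (pencil B ζ) x) = x := by
  have h := congrArg WithLp.fst (DFunLike.congr_fun (hcons ζ hζ).2 (WithLp.toLp 2 (x, (0 : Y))))
  rw [comp_apply, one_apply_eq_self, pencil_sysBlock, adjoint_block2, block2_apply,
    block2_apply] at h
  simpa using h

theorem Conservative.isUnitaryOn_iff (hcons : Conservative A B C D) {S : Submodule ℂ X}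
    (hS : ∀ k, S.Reduces (A k)) :
    (∀ ζ, onTorus ζ → IsUnitaryOn (pencil A ζ) S) ↔
      ∀ k, ∀ x ∈ S, C k x = 0 ∧ adjoint (B k) x = 0 := by
  have hadj : ∀ ζ, ∀ y ∈ S, adjoint (pencil A ζ) y ∈ S := fun ζ y hy => by
    rw [adjoint_pencil]
    exact pencil_apply_mem (fun k => (hS k).2) _ hy
  constructor
  · intro hunit k x hx
    refine ⟨apply_eq_zero_of_pencil_apply_eq_zero (fun ζ hζ => ?_) k,
      apply_eq_zero_of_pencil_apply_eq_zero (T := fun k => adjoint (B k)) (fun ξ hξ => ?_) k⟩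
    · exact (eq_iff_eq_zero_of_sq_add_norm_sq_eq (norm_nonneg _) (norm_nonneg _)
        (hcons.norm_sq_main_add_norm_sq_output hζ x)).1 ((hunit ζ hζ).1 x hx)
    · have hζ : onTorus fun k => conj (ξ k) := fun k => by simpa using hξ k
      have := (eq_iff_eq_zero_of_sq_add_norm_sq_eq (norm_nonneg _) (norm_nonneg _)
        (hcons.norm_sq_adjoint_main_add_norm_sq_adjoint_input hζ x)).1
        ((hunit _ hζ).norm_adjoint_apply (hadj _) hx)
      simpa [adjoint_pencil] using this
  · intro hvan ζ hζ
    refine ⟨fun x hx => (eq_iff_eq_zero_of_sq_add_norm_sq_eq (norm_nonneg _) (norm_nonneg _)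
        (hcons.norm_sq_main_add_norm_sq_output hζ x)).2 (by simp [pencil_apply, (hvan _ x hx).1]),
      fun y hy => ⟨_, hadj ζ y hy, ?_⟩⟩
    simpa [adjoint_pencil, pencil_apply, (hvan _ y hy).2] using
      hcons.main_adjoint_add_input_adjoint hζ y

end conservative

theorem mapsTo_topologicalClosure_span {R M : Type*} [Semiring R] [TopologicalSpace M]
    [AddCommMonoid M] [Module R M] [ContinuousAdd M] [ContinuousConstSMul R M] {s : Set M}
    {T : M →L[R] M} (hT : Set.MapsTo T s s) :
    Set.MapsTo T (Submodule.span R s).topologicalClosure (Submodule.span R s).topologicalClosure :=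
  Submodule.topologicalClosure_minimal
    (t := (Submodule.span R s).topologicalClosure.comap (T : M →ₗ[R] M)) _
    (Submodule.span_le.2 fun _ hx =>
      Submodule.le_topologicalClosure _ (Submodule.subset_span (hT hx)))
    ((Submodule.isClosed_topologicalClosure _).preimage T.continuous)

section closelyConnected

variable {X U Y : Type*}
  [NormedAddCommGroup X] [InnerProductSpace ℂ X] [CompleteSpace X]
  [NormedAddCommGroup U] [InnerProductSpace ℂ U]
  [NormedAddCommGroup Y] [InnerProductSpace ℂ Y] [CompleteSpace Y]
  {A : Fin N → X →L[ℂ] X} {B : Fin N → U →L[ℂ] X} {C : Fin N → X →L[ℂ] Y}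

theorem wordOp_cons (p : Fin N × Bool) (w : List (Fin N × Bool)) :
    wordOp A (p :: w) = (if p.2 then A p.1 else adjoint (A p.1)) ∘L wordOp A w := by
  simp only [wordOp, List.map_cons, List.prod_cons]
  rfl

theorem wordOp_apply_mem {S : Submodule ℂ X} (hS : ∀ k, S.Reduces (A k))
    (w : List (Fin N × Bool)) {x : X} (hx : x ∈ S) : wordOp A w x ∈ S := by
  induction w with
  | nil => simpa [wordOp] using hx
  | cons p w ih =>
    rw [wordOp_cons, comp_apply]
    split_ifs
    exacts [(hS p.1).1 _ ih, (hS p.1).2 _ ih]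

theorem mapsTo_ccSet (p : Fin N × Bool) :
    Set.MapsTo (if p.2 then A p.1 else adjoint (A p.1)) (ccSet A B C) (ccSet A B C) := by
  rintro _ (⟨w, k, u, rfl⟩ | ⟨w, j, y, rfl⟩)
  exacts [Or.inl ⟨p :: w, k, u, by rw [wordOp_cons, comp_apply]; split_ifs <;> rfl⟩,
    Or.inr ⟨p :: w, j, y, by rw [wordOp_cons, comp_apply]; split_ifs <;> rfl⟩]

theorem ccSpace_reduces (k : Fin N) : (ccSpace A B C).Reduces (A k) :=
  ⟨mapsTo_topologicalClosure_span (mapsTo_ccSet (k, true)),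
    mapsTo_topologicalClosure_span (mapsTo_ccSet (k, false))⟩

theorem le_orthogonal_ccSpace_iff [CompleteSpace U] {S : Submodule ℂ X}
    (hS : ∀ k, S.Reduces (A k)) :
    S ≤ (ccSpace A B C)ᗮ ↔ ∀ k, ∀ x ∈ S, C k x = 0 ∧ adjoint (B k) x = 0 := by
  constructor
  · intro hle k x hx
    have hmem : ∀ v ∈ ccSet A B C, ⟪x, v⟫_ℂ = 0 := fun v hv =>
      Submodule.inner_left_of_mem_orthogonal
        (Submodule.le_topologicalClosure _ (Submodule.subset_span hv)) (hle hx)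
    constructor
    · rw [← inner_self_eq_zero (𝕜 := ℂ), ← adjoint_inner_right]
      exact hmem _ (Or.inr ⟨[], k, C k x, rfl⟩)
    · rw [← inner_self_eq_zero (𝕜 := ℂ), adjoint_inner_left]
      exact hmem _ (Or.inl ⟨[], k, _, rfl⟩)
  · intro hvan
    have hperp : ∀ k, Sᗮ.Reduces (A k) := fun k => (hS k).orthogonal
    refine Submodule.IsOrtho.symm (Submodule.topologicalClosure_minimal _
      (Submodule.span_le.2 ?_) (Submodule.isClosed_orthogonal S))
    rintro _ (⟨w, k, u, rfl⟩ | ⟨w, j, y, rfl⟩)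
    · refine wordOp_apply_mem hperp w ((Submodule.mem_orthogonal _ _).2 fun s hs => ?_)
      rw [← adjoint_inner_left, (hvan k s hs).2, inner_zero_left]
    · refine wordOp_apply_mem hperp w ((Submodule.mem_orthogonal _ _).2 fun s hs => ?_)
      rw [adjoint_inner_right, (hvan j s hs).1, inner_zero_left]

end closelyConnected

theorem completely_nonunitary_iff_closely_connected_general {N : ℕ} {X U Y : Type}
    [NormedAddCommGroup X] [InnerProductSpace ℂ X] [CompleteSpace X]
    [NormedAddCommGroup U] [InnerProductSpace ℂ U] [CompleteSpace U]
    [NormedAddCommGroup Y] [InnerProductSpace ℂ Y] [CompleteSpace Y]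
    (A : Fin N → (X →L[ℂ] X)) (B : Fin N → (U →L[ℂ] X)) (C : Fin N → (X →L[ℂ] Y))
    (D : Fin N → (U →L[ℂ] Y))
    (hcons : Conservative A B C D) :
    (¬ HasUnitaryPart A) ↔ CloselyConnected A B C := by
  have hle_iff (S : Submodule ℂ X) (hS : ∀ k, S.Reduces (A k)) :
      S ≤ (ccSpace A B C)ᗮ ↔ ∀ ζ, onTorus ζ → IsUnitaryOn (pencil A ζ) S := by
    rw [le_orthogonal_ccSpace_iff hS, hcons.isUnitaryOn_iff hS]
  constructor
  · intro hnu
    by_contra hcc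
    have hred k := (ccSpace_reduces (A := A) (B := B) (C := C) k).orthogonal
    refine hnu ⟨_, ?_, Submodule.isClosed_orthogonal _, hred, (hle_iff _ hred).1 le_rfl⟩
    have : CompleteSpace (ccSpace A B C) :=
      (Submodule.isClosed_topologicalClosure _).completeSpace_coe
    rwa [Ne, Submodule.orthogonal_eq_bot_iff]
  · rintro hcc ⟨S, hS, -, hred, hSunit⟩
    have := (hle_iff S hred).2 hSunit
    rw [show ccSpace A B C = ⊤ from hcc, Submodule.top_orthogonal_eq_bot, le_bot_iff] at this
    exact hS this

/-- for a conservative scattering system, the `N`-tuple of main operators is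
completely non-unitary in the pencil sense iff the system is closely connected. -/
theorem completely_nonunitary_iff_closely_connected {N : ℕ} {X U Y : Type}
    [NormedAddCommGroup X] [InnerProductSpace ℂ X] [CompleteSpace X]
    [TopologicalSpace.SeparableSpace X]
    [NormedAddCommGroup U] [InnerProductSpace ℂ U] [CompleteSpace U]
    [TopologicalSpace.SeparableSpace U]
    [NormedAddCommGroup Y] [InnerProductSpace ℂ Y] [CompleteSpace Y]
    [TopologicalSpace.SeparableSpace Y]
    (A : Fin N → (X →L[ℂ] X)) (B : Fin N → (U →L[ℂ] X)) (C : Fin N → (X →L[ℂ] Y))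
    (D : Fin N → (U →L[ℂ] Y))
    (hcontr : ∀ ζ : Fin N → ℂ, onTorus ζ → ‖pencil A ζ‖ ≤ 1)
    (hcons : Conservative A B C D) :
    (¬ HasUnitaryPart A) ↔ CloselyConnected A B C :=
  completely_nonunitary_iff_closely_connected_general A B C D hcons
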